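/- arXiv:0804.0991 — 3 statements merged into one kernel-verified Lean document; each statement's English description precedes it below -/
import Mathlib

section
/- Let S be a measurable space, K : S × S → ℝ a bounded symmetric measurable kernel, and F, G probability measures on S. Then the quadratic distance satisfies d_K(F,G) = ∬ K_{cen(G)}(x,y) dF(x) dF(y). -/
open MeasureTheory

/-- The quadratic distance `d_K(F,G) = K(F,F) - 2K(F,G) + K(G,G)` generated by a
symmetric kernel `K`, where `K(A,B) = ∬ K(s,t) dA(s) dB(t)`. -/
noncomputable def quadDist {S : Type*} [MeasurableSpace S] (K : S → S → ℝ)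
    (F G : Measure S) : ℝ :=
  (∫ s, ∫ t, K s t ∂F ∂F) - 2 * (∫ s, ∫ t, K s t ∂G ∂F) + ∫ s, ∫ t, K s t ∂G ∂G

/-- The `G`-centered kernel
`K_cen(x,y) = K(x,y) - K(x,G) - K(G,y) + K(G,G)`. -/
noncomputable def centeredKernel {S : Type*} [MeasurableSpace S] (K : S → S → ℝ)
    (G : Measure S) (x y : S) : ℝ :=
  K x y - (∫ t, K x t ∂G) - (∫ s, K s y ∂G) + ∫ s, ∫ t, K s t ∂G ∂G

/-! By symmetry of `K`, the centered kernel is `K x y - g x - g y + K(G,G)` with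
`g x = K(x,G)`. Integrating it twice against the probability measure `F` gives
`K(F,F) - 2 ∫ g dF + K(G,G)`, and `∫ g dF = K(F,G)`. Boundedness and joint measurability
of `K` supply the integrability that justifies the linearity steps. -/

section BoundedKernel

variable {S : Type*} [MeasurableSpace S] {K : S → S → ℝ} {C : ℝ}

lemma integrable_of_measurable_uncurry_of_abs_le (hKmeas : Measurable (Function.uncurry K))
    (hC : ∀ x y, |K x y| ≤ C) (μ : Measure S) [IsFiniteMeasure μ] (x : S) :
    Integrable (K x) μ :=
  .of_bound (hKmeas.comp measurable_prodMk_left).aestronglyMeasurable C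
    (ae_of_all _ fun y => hC x y)

lemma integrable_integral_of_measurable_uncurry_of_abs_le
    (hKmeas : Measurable (Function.uncurry K)) (hC : ∀ x y, |K x y| ≤ C)
    (μ ν : Measure S) [IsFiniteMeasure μ] [IsFiniteMeasure ν] :
    Integrable (fun x => ∫ t, K x t ∂μ) ν :=
  .of_bound hKmeas.stronglyMeasurable.integral_prod_right'.aestronglyMeasurable
    (C * μ.real Set.univ)
    (ae_of_all _ fun x => norm_integral_le_of_norm_le_const (ae_of_all _ fun t => hC x t))

end BoundedKernel

lemma integral_integral_sub_sub_add {α : Type*} [MeasurableSpace α] {μ : Measure α}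
    [IsProbabilityMeasure μ] {f : α → α → ℝ} {g : α → ℝ} (hf : ∀ x, Integrable (f x) μ)
    (hf' : Integrable (fun x => ∫ y, f x y ∂μ) μ) (hg : Integrable g μ) (c : ℝ) :
    ∫ x, ∫ y, (f x y - g x - g y + c) ∂μ ∂μ
      = (∫ x, ∫ y, f x y ∂μ ∂μ) - 2 * ∫ x, g x ∂μ + c := by
  have hinner : ∀ x, ∫ y, (f x y - g x - g y + c) ∂μ = (∫ y, f x y ∂μ) - g x - ∫ y, g y ∂μ + c :=
    fun x => by
      rw [integral_add (by fun_prop) (by fun_prop), integral_sub (by fun_prop) hg,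
        integral_sub (hf x) (by fun_prop)]
      simp
  simp_rw [hinner]
  rw [integral_add (by fun_prop) (by fun_prop), integral_sub (by fun_prop) (by fun_prop),
    integral_sub hf' hg]
  simp only [integral_const, probReal_univ, smul_eq_mul, one_mul, add_left_inj]
  ring

/-- the quadratic distance equals the double `F`-integral of the
`G`-centered kernel: `d_K(F,G) = ∬ K_{cen(G)}(x,y) dF(x) dF(y)`. -/
theorem quadDist_eq_integral_centeredKernel {S : Type*} [MeasurableSpace S]
    (K : S → S → ℝ)
    (hKmeas : Measurable (Function.uncurry K))
    (hKsymm : ∀ x y, K x y = K y x)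
    (hKbdd : ∃ C, ∀ x y, |K x y| ≤ C)
    (F G : Measure S) [IsProbabilityMeasure F] [IsProbabilityMeasure G] :
    quadDist K F G = ∫ x, ∫ y, centeredKernel K G x y ∂F ∂F := by
  obtain ⟨C, hC⟩ := hKbdd
  have hcentered : centeredKernel K G = fun x y =>
      K x y - (∫ t, K x t ∂G) - (∫ t, K y t ∂G) + ∫ s, ∫ t, K s t ∂G ∂G := by
    ext x y
    simp only [centeredKernel, hKsymm _ y]
  rw [hcentered, integral_integral_sub_sub_add
    (integrable_of_measurable_uncurry_of_abs_le hKmeas hC F)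
    (integrable_integral_of_measurable_uncurry_of_abs_le hKmeas hC F F)
    (integrable_integral_of_measurable_uncurry_of_abs_le hKmeas hC G F), quadDist]
end

section
/- Let S be a measurable space, G a probability measure on S, p a positive integer, and u : S → ℝ^p a measurable function with each component in L²(G). Let u*(x) = (1, u(x)ᵀ)ᵀ ∈ ℝ^{p+1}, suppose the extended information matrix J* = ∫ u*(x) u*(x)ᵀ dG(x) is invertible, and set P*(x,y) = u*(x)ᵀ (J*)^{−1} u*(y). Let K : S × S → ℝ be a bounded symmetric measurable kernel and define the score-centered kernel K_{scen}(x,y) = K(x,y) − ∫ P*(x,z) K(z,y) dG(z) − ∫ K(x,z) P*(z,y) dG(z) + ∬ P*(x,z) K(z,w) P*(w,y) dG(z) dG(w). Then for every x ∈ S, ∫ K_{scen}(x,y) u*(y) dG(y) = 0 ∈ ℝ^{p+1}. -/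
/-!
Write `L(x, y) = K(x, y) - ∫ P*(x, w) K(w, y) dG(w)`. Exchanging the order of integration in the
last term of `K_scen` (Fubini: `K` is bounded and `P*(x, ·)`, `P*(·, y)` are integrable) gives
`K_scen(x, ·) = f - ∫ f(z) P*(z, ·) dG(z)` with `f = L(x, ·)`.
Since `P*(z, y) = u*(z) ⬝ (J*)⁻¹ u*(y)`, the function `∫ f(z) P*(z, ·) dG(z)` is `t ⬝ (J*)⁻¹ u*`
with `t = ∫ f u*`, and as `J*` is the Gram matrix of `u*` its inner products against `u*` are
`t (J*)⁻¹ J* = t`. So `f - ∫ f(z) P*(z, ·) dG(z)` is orthogonal to `u*` whenever `f u*` is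
integrable, which holds for `f = L(x, ·)` because it is bounded.
-/

open MeasureTheory

/-- The extended score vector `u*(x) = (1, u(x)ᵀ)ᵀ ∈ ℝ^{p+1}`. -/
noncomputable def extScore {S : Type*} {p : ℕ} (u : S → Fin p → ℝ) (x : S) :
    Fin (p + 1) → ℝ :=
  Fin.cons 1 (u x)

/-- The projection kernel `P*(x,y) = u*(x)ᵀ (J*)⁻¹ u*(y)` onto the extended score space. -/
noncomputable def scoreProjKernel {S : Type*} {p : ℕ} (u : S → Fin p → ℝ)
    (Jstar : Matrix (Fin (p + 1)) (Fin (p + 1)) ℝ) (x y : S) : ℝ :=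
  ∑ i, ∑ j, extScore u x i * Jstar⁻¹ i j * extScore u y j

/-- The score-centered kernel `K_scen = (I - P*) K (I - P*)`. -/
noncomputable def scoreCenteredKernel {S : Type*} [MeasurableSpace S] {p : ℕ}
    (G : Measure S) (u : S → Fin p → ℝ)
    (Jstar : Matrix (Fin (p + 1)) (Fin (p + 1)) ℝ) (K : S → S → ℝ) (x y : S) : ℝ :=
  K x y - (∫ z, scoreProjKernel u Jstar x z * K z y ∂G)
    - (∫ z, K x z * scoreProjKernel u Jstar z y ∂G)
    + ∫ z, ∫ w, scoreProjKernel u Jstar x z * K z w * scoreProjKernel u Jstar w y ∂G ∂G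

open Matrix

section DotProduct

variable {S ι : Type*} [MeasurableSpace S] {μ : Measure S} [Fintype ι]

theorem integral_dotProduct_const {v : S → ι → ℝ} (hv : ∀ b, Integrable (fun z => v z b) μ)
    (w : ι → ℝ) : ∫ z, v z ⬝ᵥ w ∂μ = (∫ z, v z ∂μ) ⬝ᵥ w := by
  simp only [dotProduct, eval_integral hv]
  rw [integral_finsetSum _ fun b _ => (hv b).mul_const _]
  simp only [integral_mul_const]

theorem integrable_const_dotProduct {e : S → ι → ℝ} (he : ∀ b, Integrable (fun z => e z b) μ)
    (s : ι → ℝ) : Integrable (fun z => s ⬝ᵥ e z) μ :=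
  integrable_finsetSum _ fun b _ => (he b).const_mul _

variable {e : S → ι → ℝ} {J : Matrix ι ι ℝ}

theorem integrable_dotProduct_mul (he : ∀ a b, Integrable (fun y => e y a * e y b) μ)
    (s : ι → ℝ) (a : ι) : Integrable (fun y => (s ⬝ᵥ e y) * e y a) μ := by
  simp only [dotProduct, Finset.sum_mul, mul_assoc]
  exact integrable_finsetSum _ fun b _ => (he b a).const_mul _

theorem integral_dotProduct_mul_eq_vecMul (he : ∀ a b, Integrable (fun y => e y a * e y b) μ)
    (hJ : ∀ a b, J a b = ∫ y, e y a * e y b ∂μ) (s : ι → ℝ) (a : ι) :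
    ∫ y, (s ⬝ᵥ e y) * e y a ∂μ = (s ᵥ* J) a := by
  simp only [dotProduct, Finset.sum_mul, mul_assoc, vecMul, hJ]
  rw [integral_finsetSum _ fun b _ => (he b a).const_mul _]
  simp only [integral_const_mul]

theorem integral_dotProduct_inv_mulVec_mul [DecidableEq ι]
    (he : ∀ a b, Integrable (fun y => e y a * e y b) μ)
    (hJ : ∀ a b, J a b = ∫ y, e y a * e y b ∂μ) (hJinv : IsUnit J.det) (t : ι → ℝ) (a : ι) :
    ∫ y, (t ⬝ᵥ (J⁻¹ *ᵥ e y)) * e y a ∂μ = t a := by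
  simp only [dotProduct_mulVec]
  rw [integral_dotProduct_mul_eq_vecMul he hJ, vecMul_vecMul, nonsing_inv_mul J hJinv,
    vecMul_one]

end DotProduct

section BoundedKernel

variable {S : Type*} [MeasurableSpace S] {μ ν : Measure S} {K : S → S → ℝ} {C : ℝ} {f g : S → ℝ}

theorem norm_integral_mul_kernel_le (hC : ∀ x y, |K x y| ≤ C) (hf : Integrable f μ) (z : S) :
    ‖∫ w, f w * K w z ∂μ‖ ≤ (∫ w, ‖f w‖ ∂μ) * C := by
  rw [← integral_mul_const]
  refine norm_integral_le_of_norm_le (hf.norm.mul_const C) (ae_of_all _ fun w => ?_)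
  rw [norm_mul]
  exact mul_le_mul_of_nonneg_left (hC w z) (norm_nonneg _)

theorem aestronglyMeasurable_integral_mul_kernel [SFinite μ] [SFinite ν]
    (hK : Measurable (Function.uncurry K)) (hf : AEStronglyMeasurable f μ) :
    AEStronglyMeasurable (fun z => ∫ w, f w * K w z ∂μ) ν :=
  (hf.comp_snd.mul (hK.comp measurable_swap).aestronglyMeasurable).integral_prod_right'

theorem integrable_kernel_mul (hK : Measurable (Function.uncurry K)) (hC : ∀ x y, |K x y| ≤ C)
    (hg : Integrable g ν) (x : S) : Integrable (fun z => K x z * g z) ν :=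
  hg.bdd_mul hK.of_uncurry_left.aestronglyMeasurable (ae_of_all _ fun z => hC x z)

theorem integrable_integral_mul_kernel_mul [SFinite μ] [SFinite ν]
    (hK : Measurable (Function.uncurry K)) (hC : ∀ x y, |K x y| ≤ C)
    (hf : Integrable f μ) (hg : Integrable g ν) :
    Integrable (fun z => (∫ w, f w * K w z ∂μ) * g z) ν :=
  hg.bdd_mul (aestronglyMeasurable_integral_mul_kernel hK hf.aestronglyMeasurable)
    (ae_of_all _ (norm_integral_mul_kernel_le hC hf))

theorem integral_integral_mul_kernel_mul_comm [SFinite μ] [SFinite ν]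
    (hK : Measurable (Function.uncurry K)) (hC : ∀ x y, |K x y| ≤ C)
    (hf : Integrable f μ) (hg : Integrable g ν) :
    ∫ z, (∫ w, f w * K w z ∂μ) * g z ∂ν = ∫ w, ∫ z, f w * K w z * g z ∂ν ∂μ := by
  simp only [← integral_mul_const]
  refine integral_integral_swap ?_
  refine ((hg.mul_prod hf).bdd_mul (hK.comp measurable_swap).aestronglyMeasurable
    (ae_of_all _ fun q => hC q.2 q.1)).congr (ae_of_all _ fun q => ?_)
  simp only [Function.uncurry, Function.comp, Prod.fst_swap, Prod.snd_swap]
  ring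

theorem integral_sub_integral_mul_kernel_mul [SFinite μ]
    (hK : Measurable (Function.uncurry K)) (hC : ∀ x y, |K x y| ≤ C)
    (hf : Integrable f μ) (hg : Integrable g μ) (x : S) :
    ∫ z, (K x z - ∫ w, f w * K w z ∂μ) * g z ∂μ
      = ∫ z, K x z * g z ∂μ - ∫ w, ∫ z, f w * K w z * g z ∂μ ∂μ := by
  simp only [sub_mul]
  rw [integral_sub (integrable_kernel_mul hK hC hg x)
      (integrable_integral_mul_kernel_mul hK hC hf hg),
    integral_integral_mul_kernel_mul_comm hK hC hf hg]

theorem integrable_sub_integral_mul_kernel_mul [SFinite μ] [SFinite ν]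
    (hK : Measurable (Function.uncurry K)) (hC : ∀ x y, |K x y| ≤ C)
    (hf : Integrable f μ) (hg : Integrable g ν) (x : S) :
    Integrable (fun z => (K x z - ∫ w, f w * K w z ∂μ) * g z) ν := by
  simp only [sub_mul]
  exact (integrable_kernel_mul hK hC hg x).sub (integrable_integral_mul_kernel_mul hK hC hf hg)

end BoundedKernel

section ProjectionKernel

variable {S ι : Type*} [MeasurableSpace S] {μ : Measure S} [Fintype ι] [DecidableEq ι]
  {e : S → ι → ℝ} {J : Matrix ι ι ℝ} {P : S → S → ℝ} {f : S → ℝ}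

theorem integrable_projKernel_left (hP : ∀ z y, P z y = e z ⬝ᵥ (J⁻¹ *ᵥ e y))
    (he : ∀ b, Integrable (fun z => e z b) μ) (y : S) : Integrable (fun z => P z y) μ := by
  simp only [hP, dotProduct_comm (e _)]
  exact integrable_const_dotProduct he _

theorem integrable_projKernel_right (hP : ∀ z y, P z y = e z ⬝ᵥ (J⁻¹ *ᵥ e y))
    (he : ∀ b, Integrable (fun z => e z b) μ) (x : S) : Integrable (fun z => P x z) μ := by
  simp only [hP, dotProduct_mulVec]
  exact integrable_const_dotProduct he _

theorem integral_mul_projKernel (hP : ∀ z y, P z y = e z ⬝ᵥ (J⁻¹ *ᵥ e y))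
    (hf : ∀ b, Integrable (fun z => f z * e z b) μ) (y : S) :
    ∫ z, f z * P z y ∂μ = (∫ z, f z • e z ∂μ) ⬝ᵥ (J⁻¹ *ᵥ e y) := by
  simp only [hP, ← smul_eq_mul, ← smul_dotProduct]
  exact integral_dotProduct_const hf _

theorem integral_sub_integral_mul_projKernel_mul
    (he : ∀ a b, Integrable (fun y => e y a * e y b) μ)
    (hJ : ∀ a b, J a b = ∫ y, e y a * e y b ∂μ) (hJinv : IsUnit J.det)
    (hP : ∀ z y, P z y = e z ⬝ᵥ (J⁻¹ *ᵥ e y))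
    (hf : ∀ b, Integrable (fun z => f z * e z b) μ) (a : ι) :
    ∫ y, (f y - ∫ z, f z * P z y ∂μ) * e y a ∂μ = 0 := by
  simp only [integral_mul_projKernel hP hf, sub_mul]
  have hPf : Integrable (fun y => ((∫ z, f z • e z ∂μ) ⬝ᵥ (J⁻¹ *ᵥ e y)) * e y a) μ := by
    simpa only [dotProduct_mulVec] using integrable_dotProduct_mul he _ a
  rw [integral_sub (hf a) hPf, integral_dotProduct_inv_mulVec_mul he hJ hJinv,
    eval_integral (f := fun z => f z • e z) hf]
  exact sub_self _

end ProjectionKernel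

theorem memLp_extScore {S : Type*} [MeasurableSpace S] {μ : Measure S} [IsFiniteMeasure μ]
    {p : ℕ} {u : S → Fin p → ℝ} {q : ENNReal} (hu : ∀ i, MemLp (fun x => u x i) q μ) :
    ∀ a, MemLp (fun x => extScore u x a) q μ :=
  Fin.cases (memLp_const 1) hu

theorem scoreProjKernel_eq_dotProduct {S : Type*} {p : ℕ} (u : S → Fin p → ℝ)
    (J : Matrix (Fin (p + 1)) (Fin (p + 1)) ℝ) (x y : S) :
    scoreProjKernel u J x y = extScore u x ⬝ᵥ (J⁻¹ *ᵥ extScore u y) := by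
  simp only [scoreProjKernel, dotProduct, mulVec, Finset.mul_sum, mul_assoc]

theorem scoreCenteredKernel_orthogonal_general {S : Type*} [MeasurableSpace S]
    (G : Measure S) [IsProbabilityMeasure G]
    (p : ℕ) (u : S → Fin p → ℝ)
    (huL2 : ∀ i, MemLp (fun x => u x i) 2 G)
    (K : S → S → ℝ)
    (hKmeas : Measurable (Function.uncurry K))
    (hKbdd : ∃ C, ∀ x y, |K x y| ≤ C)
    (Jstar : Matrix (Fin (p + 1)) (Fin (p + 1)) ℝ)
    (hJ : ∀ i j, Jstar i j = ∫ x, extScore u x i * extScore u x j ∂G)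
    (hJinv : IsUnit Jstar.det) :
    ∀ x : S, ∀ i : Fin (p + 1),
      ∫ y, scoreCenteredKernel G u Jstar K x y * extScore u y i ∂G = 0 := by
  intro x i
  obtain ⟨C, hC⟩ := hKbdd
  have hL2 := memLp_extScore huL2
  have he : ∀ a, Integrable (fun y => extScore u y a) G := fun a => (hL2 a).integrable one_le_two
  have hP := scoreProjKernel_eq_dotProduct u Jstar
  have hcentered : ∀ y, scoreCenteredKernel G u Jstar K x y
      = (K x y - ∫ w, scoreProjKernel u Jstar x w * K w y ∂G)
        - ∫ z, (K x z - ∫ w, scoreProjKernel u Jstar x w * K w z ∂G)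
          * scoreProjKernel u Jstar z y ∂G := fun y => by
    rw [integral_sub_integral_mul_kernel_mul hKmeas hC (integrable_projKernel_right hP he x)
      (integrable_projKernel_left hP he y)]
    simp only [scoreCenteredKernel]
    ring
  simp only [hcentered]
  exact integral_sub_integral_mul_projKernel_mul (fun a b => (hL2 a).integrable_mul (hL2 b)) hJ
    hJinv hP (fun b => integrable_sub_integral_mul_kernel_mul hKmeas hC
      (integrable_projKernel_right hP he x) (he b) x) i

/-- the score-centered kernel is `G`-orthogonal to the extended scores:
`∫ K_scen(x,y) u*(y) dG(y) = 0 ∈ ℝ^{p+1}` (componentwise) for every `x`. -/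
theorem scoreCenteredKernel_orthogonal {S : Type*} [MeasurableSpace S]
    (G : Measure S) [IsProbabilityMeasure G]
    (p : ℕ) (hp : 0 < p) (u : S → Fin p → ℝ)
    (humeas : ∀ i, Measurable fun x => u x i)
    (huL2 : ∀ i, MemLp (fun x => u x i) 2 G)
    (K : S → S → ℝ)
    (hKmeas : Measurable (Function.uncurry K))
    (hKsymm : ∀ x y, K x y = K y x)
    (hKbdd : ∃ C, ∀ x y, |K x y| ≤ C)
    (Jstar : Matrix (Fin (p + 1)) (Fin (p + 1)) ℝ)
    (hJ : ∀ i j, Jstar i j = ∫ x, extScore u x i * extScore u x j ∂G)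
    (hJinv : IsUnit Jstar.det) :
    ∀ x : S, ∀ i : Fin (p + 1),
      ∫ y, scoreCenteredKernel G u Jstar K x y * extScore u y i ∂G = 0 :=
  scoreCenteredKernel_orthogonal_general G p u huL2 K hKmeas hKbdd Jstar hJ hJinv
end

section
/- Let R be a positive integer and let (γ_i)_{i∈ℕ} be a sequence of nonnegative reals with Σ_i γ_i² = 1 and Σ_i γ_i = √R. Then for every integer r ≥ 3, Σ_i γ_i^r ≥ R^{1 − r/2}, i.e. Σ_i γ_i^r ≥ R · (1/√R)^r. -/
/-!
Multiply the tangent-line bound `x ^ (n + 1) ≥ c ^ (n + 1) + (n + 1) c ^ n (x - c)` by `γ i`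
and sum over `i`. With `c = Σ γ_i² / Σ γ_i = 1 / √R` the linear term `Σ γ_i² - c Σ γ_i`
vanishes, leaving `Σ γ_i ^ (n + 2) ≥ c ^ (n + 1) Σ γ_i = √R · (1 / √R) ^ (n + 1)`.
-/

theorem pow_add_mul_sub_le_pow {x c : ℝ} (hx : 0 ≤ x) (hc : 0 < c) (n : ℕ) :
    c ^ (n + 1) + (n + 1) * c ^ n * (x - c) ≤ x ^ (n + 1) := by
  have bernoulli :=
    one_add_mul_le_pow (a := x / c - 1) (by linarith [div_nonneg hx hc.le]) (n + 1)
  rw [add_sub_cancel, div_pow, le_div_iff₀ (pow_pos hc _)] at bernoulli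
  calc c ^ (n + 1) + (n + 1) * c ^ n * (x - c)
      = (1 + ((n + 1 : ℕ) : ℝ) * (x / c - 1)) * c ^ (n + 1) := by
        field_simp
        push_cast
        ring
    _ ≤ x ^ (n + 1) := bernoulli

theorem pow_succ_mul_tsum_le_tsum_pow {ι : Type*} {f : ι → ℝ} {c : ℝ} (n : ℕ)
    (hf : ∀ i, 0 ≤ f i) (hc : 0 < c) (hs1 : Summable f) (hs2 : Summable fun i => f i ^ 2)
    (hsn : Summable fun i => f i ^ (n + 2)) (hcf : c * ∑' i, f i = ∑' i, f i ^ 2) :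
    c ^ (n + 1) * ∑' i, f i ≤ ∑' i, f i ^ (n + 2) := by
  have tangent (i : ι) :
      c ^ (n + 1) * f i + (n + 1) * c ^ n * (f i ^ 2 - c * f i) ≤ f i ^ (n + 2) := by
    calc c ^ (n + 1) * f i + (n + 1) * c ^ n * (f i ^ 2 - c * f i)
        = f i * (c ^ (n + 1) + (n + 1) * c ^ n * (f i - c)) := by ring
      _ ≤ f i * f i ^ (n + 1) :=
          mul_le_mul_of_nonneg_left (pow_add_mul_sub_le_pow (hf i) hc n) (hf i)
      _ = f i ^ (n + 2) := by ring
  calc c ^ (n + 1) * (∑' i, f i)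
      = ∑' i, (c ^ (n + 1) * f i + (n + 1) * c ^ n * (f i ^ 2 - c * f i)) := by
        rw [(hs1.mul_left _).tsum_add ((hs2.sub (hs1.mul_left c)).mul_left _), tsum_mul_left,
          tsum_mul_left, hs2.tsum_sub (hs1.mul_left c), tsum_mul_left, hcf]
        ring
    _ ≤ ∑' i, f i ^ (n + 2) :=
        Summable.tsum_le_tsum tangent
          ((hs1.mul_left _).add ((hs2.sub (hs1.mul_left c)).mul_left _)) hsn

/-- if `(γ_i)` are nonnegative with `Σ γ_i² = 1` and `Σ γ_i = √R` for a
positive integer `R`, then for every integer `r ≥ 3`, `Σ γ_i^r ≥ R · (1/√R)^r = R^{1-r/2}`. -/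
theorem chi_star_cumulant_lower_bound (R : ℕ) (hR : 0 < R) (γ : ℕ → ℝ)
    (h0 : ∀ i, 0 ≤ γ i)
    (hs2 : Summable fun i => (γ i) ^ 2) (h2 : (∑' i, (γ i) ^ 2) = 1)
    (hs1 : Summable γ) (h1 : (∑' i, γ i) = Real.sqrt R) :
    ∀ r : ℕ, 3 ≤ r → (R : ℝ) * (1 / Real.sqrt R) ^ r ≤ ∑' i, (γ i) ^ r := by
  intro r hr
  obtain ⟨n, rfl⟩ : ∃ n, r = n + 2 := ⟨r - 2, by omega⟩
  have hS : 0 < Real.sqrt R := Real.sqrt_pos.mpr (by exact_mod_cast hR)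
  have hle1 (i : ℕ) : γ i ≤ 1 := by
    have : γ i ^ 2 ≤ 1 := h2 ▸ hs2.le_tsum i fun j _ => sq_nonneg (γ j)
    nlinarith [h0 i]
  have hsn : Summable fun i => γ i ^ (n + 2) :=
    hs2.of_nonneg_of_le (fun i => pow_nonneg (h0 i) _)
      fun i => pow_le_pow_of_le_one (h0 i) (hle1 i) (by omega)
  have hc : 1 / Real.sqrt R * ∑' i, γ i = ∑' i, γ i ^ 2 := by
    rw [h1, h2, one_div_mul_cancel hS.ne']
  calc (R : ℝ) * (1 / Real.sqrt R) ^ (n + 2)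
      = (1 / Real.sqrt R) ^ (n + 1) * ∑' i, γ i := by
        rw [h1, pow_succ _ (n + 1)]
        nth_rewrite 1 [← Real.mul_self_sqrt (Nat.cast_nonneg R)]
        field_simp
    _ ≤ ∑' i, γ i ^ (n + 2) :=
        pow_succ_mul_tsum_le_tsum_pow n h0 (by positivity) hs1 hs2 hsn hc
end
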